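/- arXiv:2301.03176 — 5 statements merged into one kernel-verified Lean document; each statement's English description precedes it below -/
import Mathlib

section
/- For every real λ, every real y with |λy| < 1, and every real x with x ≠ 1 and |λxy| < 1, one has (e_λ(xy) − e_λ(y))/(x − 1) = Σ_{n=0}^∞ T_n(y) x^n, where the series on the right converges. -/
noncomputable section

/-- Generalized falling factorial `(x)_{n,λ} = x(x-λ)⋯(x-(n-1)λ)`, with `(x)_{0,λ} = 1`. -/
def dff (lam x : ℝ) (n : ℕ) : ℝ := ∏ i ∈ Finset.range n, (x - i * lam)

/-- Degenerate exponential `e_λ(y) = ∑_{n=0}^∞ (1)_{n,λ} y^n / n!`. -/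
def dexp (lam y : ℝ) : ℝ := ∑' n : ℕ, dff lam 1 n * y ^ n / n.factorial

/-- Truncated degenerate exponential tail
`T_n(y) = e_λ(y) - ∑_{k=0}^n (1)_{k,λ} y^k / k!`. -/
def dtail (lam y : ℝ) (n : ℕ) : ℝ :=
  dexp lam y - ∑ k ∈ Finset.range (n + 1), dff lam 1 k * y ^ k / k.factorial

/-!
Put `a k = (1)_{k,λ} y^k / k!`, so that `T_n(y) = ∑_{k>n} a k`, and consider the double series
`∑_{n<k} a k x^n`. Summed by rows it is `∑ T_n(y) x^n`; summed by columns it is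
`∑ a k (x^k - 1)/(x - 1) = (e_λ(xy) - e_λ(y))/(x - 1)`. Fubini applies because, with
`r = max 1 |x|`, the double series is dominated by `∑_k k |a k| r^k`, and the ratio test gives
convergence of that: the ratio of consecutive terms tends to `|λ r y|`, which is `< 1` precisely
by the two hypotheses on `λy` and `λxy`.
-/

open Filter Topology Finset

theorem summable_of_norm_succ_le_of_tendsto {E : Type*} [SeminormedAddCommGroup E]
    [CompleteSpace E] {f : ℕ → E} {g : ℕ → ℝ} {l : ℝ} (hl : l < 1)
    (hg : Tendsto g atTop (𝓝 l)) (hf : ∀ᶠ n in atTop, ‖f (n + 1)‖ ≤ g n * ‖f n‖) :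
    Summable f := by
  obtain ⟨r, hlr, hr⟩ := exists_between hl
  refine summable_of_ratio_norm_eventually_le hr ?_
  filter_upwards [hf, hg.eventually_le_const hlr] with n hn hgn
  exact hn.trans (mul_le_mul_of_nonneg_right hgn (norm_nonneg _))

section TailSeries

variable {𝕜 : Type*} [NormedField 𝕜] {a : ℕ → 𝕜} {x : 𝕜} {r : ℝ}

def tailMulPowFamily (a : ℕ → 𝕜) (x : 𝕜) (p : ℕ × ℕ) : 𝕜 :=
  if p.1 < p.2 then a p.2 * x ^ p.1 else 0

theorem summable_tailMulPowFamily [CompleteSpace 𝕜] (hr : 1 ≤ r) (hxr : ‖x‖ ≤ r)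
    (ha : Summable fun k : ℕ => ((k : ℝ) + 1) * ‖a k‖ * r ^ k) :
    Summable (tailMulPowFamily a x) := by
  set g : ℕ × ℕ → ℝ := fun p => if p.1 < p.2 then ‖a p.2‖ * r ^ p.2 else 0
  have hg : Summable fun p : ℕ × ℕ => g p.swap := by
    refine (summable_prod_of_nonneg fun p => ?_).2 ⟨fun k => ?_, ?_⟩
    · dsimp only [g]; split_ifs <;> positivity
    · exact summable_of_ne_finset_zero (s := range k) fun n hn => by simp_all [g]
    · have hrow : ∀ k, ∑' n, g (k, n).swap = k * (‖a k‖ * r ^ k) := fun k => by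
        rw [tsum_eq_sum (s := range k) fun n hn => by simp_all [g]]
        simp only [g, Prod.swap_prod_mk]
        rw [sum_ite_of_true fun n hn => mem_range.1 hn, sum_const, card_range, nsmul_eq_mul]
      simp only [hrow]
      refine ha.of_nonneg_of_le (fun k => by positivity) fun k => ?_
      rw [mul_assoc]
      exact mul_le_mul_of_nonneg_right (by linarith) (by positivity)
  refine Summable.of_norm_bounded hg.prod_symm fun ⟨n, k⟩ => ?_
  dsimp only [tailMulPowFamily, g, Prod.swap_prod_mk]
  split_ifs with h
  · rw [norm_mul, norm_pow]
    refine mul_le_mul_of_nonneg_left ?_ (norm_nonneg _)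
    exact (pow_le_pow_left₀ (norm_nonneg x) hxr _).trans (pow_le_pow_right₀ hr h.le)
  · rw [norm_zero]

theorem hasSum_tailMulPowFamily_row {s : 𝕜} (hs : HasSum a s) (n : ℕ) :
    HasSum (fun k => tailMulPowFamily a x (n, k)) ((s - ∑ k ∈ range (n + 1), a k) * x ^ n) := by
  rw [← hasSum_nat_add_iff' (n + 1)]
  have h0 : ∑ k ∈ range (n + 1), tailMulPowFamily a x (n, k) = 0 :=
    sum_eq_zero fun k hk => if_neg (by simp at hk; omega)
  rw [h0, sub_zero]
  simp only [tailMulPowFamily, show ∀ k, n < k + (n + 1) from fun k => by omega, if_true]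
  exact ((hasSum_nat_add_iff' (n + 1)).2 hs).mul_right _

theorem hasSum_tailMulPowFamily_col (hx : x ≠ 1) (k : ℕ) :
    HasSum (fun n => tailMulPowFamily a x (n, k)) (a k * ((x ^ k - 1) / (x - 1))) := by
  rw [← geom_sum_eq hx, mul_sum]
  have h := hasSum_sum_of_ne_finset_zero (L := SummationFilter.unconditional ℕ)
    (f := fun n => tailMulPowFamily a x (n, k)) (s := range k)
    fun n hn => if_neg (by simpa using hn)
  convert h using 1
  exact sum_congr rfl fun n hn => (if_pos (mem_range.1 hn)).symm

theorem hasSum_tail_mul_pow [CompleteSpace 𝕜] (hx : x ≠ 1) (hr : 1 ≤ r) (hxr : ‖x‖ ≤ r)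
    (ha : Summable fun k : ℕ => ((k : ℝ) + 1) * ‖a k‖ * r ^ k) :
    HasSum (fun n => (∑' k, a k - ∑ k ∈ range (n + 1), a k) * x ^ n)
      ((∑' k, a k * x ^ k - ∑' k, a k) / (x - 1)) := by
  have hsum : ∀ z : 𝕜, ‖z‖ ≤ r → Summable fun k => a k * z ^ k := fun z hz =>
    .of_norm_bounded ha fun k => by
      rw [norm_mul, norm_pow, mul_comm ((k : ℝ) + 1), mul_assoc]
      gcongr
      calc ‖z‖ ^ k ≤ r ^ k := pow_le_pow_left₀ (norm_nonneg z) hz k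
        _ ≤ (k + 1) * r ^ k :=
          le_mul_of_one_le_left (by positivity) (by linarith [k.cast_nonneg (α := ℝ)])
  have hs : HasSum a (∑' k, a k) := by
    simpa using (hsum 1 (by simpa using hr)).hasSum
  have hF := (summable_tailMulPowFamily hr hxr ha).hasSum
  have hrows := hF.prod_fiberwise (hasSum_tailMulPowFamily_row hs)
  have hcols := ((Equiv.prodComm ℕ ℕ).hasSum_iff.2 hF).prod_fiberwise
    (hasSum_tailMulPowFamily_col (a := a) hx)
  have hdiff : HasSum (fun k => a k * ((x ^ k - 1) / (x - 1)))
      ((∑' k, a k * x ^ k - ∑' k, a k) / (x - 1)) := by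
    convert ((hsum x hxr).hasSum.sub hs).div_const (x - 1) using 2
    ring
  rwa [hcols.unique hdiff] at hrows

end TailSeries

theorem dff_succ (lam x : ℝ) (n : ℕ) : dff lam x (n + 1) = dff lam x n * (x - n * lam) :=
  prod_range_succ _ _

def dexpTerm (lam y : ℝ) (k : ℕ) : ℝ := dff lam 1 k * y ^ k / k.factorial

theorem dexpTerm_mul (lam c y : ℝ) (k : ℕ) :
    dexpTerm lam (c * y) k = dexpTerm lam y k * c ^ k := by
  simp only [dexpTerm, mul_pow]
  ring

theorem summable_succ_mul_norm_dexpTerm {lam u : ℝ} (h : |lam * u| < 1) :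
    Summable fun k : ℕ => ((k : ℝ) + 1) * ‖dexpTerm lam u k‖ := by
  -- the exact ratio `(k+2)/(k+1) · |1 - kλ|/(k+1) · |u|` of consecutive terms, written so that
  -- its limit can be read off
  set g : ℕ → ℝ := fun k =>
    (1 + 1 / ((k : ℝ) + 1)) * |(1 + lam) * (1 / ((k : ℝ) + 1)) - lam| * |u|
  have hg : Tendsto g atTop (𝓝 |lam * u|) := by
    have h0 := tendsto_one_div_add_atTop_nhds_zero_nat (𝕜 := ℝ)
    convert (((tendsto_const_nhds.add h0).mul
      ((tendsto_const_nhds.mul h0).sub tendsto_const_nhds).abs).mul tendsto_const_nhds) using 2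
    simp [abs_mul]
  refine summable_of_norm_succ_le_of_tendsto h hg (Eventually.of_forall fun k => le_of_eq ?_)
  have hfrac : (1 + lam) * (1 / ((k : ℝ) + 1)) - lam = (1 - k * lam) / (k + 1) := by
    field_simp
    ring
  simp only [g, hfrac, dexpTerm, dff_succ, Nat.factorial_succ, norm_mul, Real.norm_eq_abs, abs_abs,
    abs_div, abs_mul, abs_pow, Nat.abs_cast, Nat.cast_mul, Nat.cast_succ]
  rw [abs_of_pos (by positivity : (0 : ℝ) < k + 1),
    abs_of_pos (by positivity : (0 : ℝ) < k + 1 + 1)]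
  field_simp
  ring

theorem stmt_0 (lam y x : ℝ) (hy : |lam * y| < 1) (hx : x ≠ 1) (hxy : |lam * (x * y)| < 1) :
    HasSum (fun n : ℕ => dtail lam y n * x ^ n)
      ((dexp lam (x * y) - dexp lam y) / (x - 1)) := by
  set r := max 1 |x|
  have hr : 0 ≤ r := zero_le_one.trans (le_max_left _ _)
  have hu : |lam * (r * y)| < 1 := by
    rw [mul_left_comm, abs_mul, abs_of_nonneg hr, max_mul_of_nonneg _ _ (abs_nonneg _), one_mul,
      ← abs_mul, mul_left_comm]
    exact max_lt hy hxy
  have ha : Summable fun k : ℕ => ((k : ℝ) + 1) * ‖dexpTerm lam y k‖ * r ^ k := by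
    simpa only [dexpTerm_mul, norm_mul, norm_pow, Real.norm_of_nonneg hr, mul_assoc]
      using summable_succ_mul_norm_dexpTerm hu
  have h := hasSum_tail_mul_pow hx (le_max_left _ _) (le_max_right _ _) ha
  simp only [← dexpTerm_mul] at h
  exact h
end
end

section
/- For every real λ and every real y with |λy| < 1, one has Σ_{n=0}^∞ T_n(y) = (y/(1+λy)) e_λ(y), where the series on the left converges. -/
/-
Write `a_k = (1)_{k,λ} y^k / k!`. Since `T_n = ∑_{k > n} a_k`, exchanging the order of summation
gives `∑_n T_n = ∑_k k a_k`; the exchange is legitimate because `∑_k k |a_k|` converges by the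
ratio test, the ratio `|(1 - kλ) y| / k` tending to `|λy| < 1`. The recurrence
`(k + 1) a_{k+1} = (1 - kλ) y a_k` then shows `S = ∑_k k a_k = ∑_k (k + 1) a_{k+1}` satisfies
`S = y e_λ(y) - λy S`.
-/

noncomputable section

section Tails

open Finset

variable {E : Type*} [NormedAddCommGroup E]

theorem hasSum_ite_lt (k : ℕ) (c : E) : HasSum (fun n => if n < k then c else 0) (k • c) := by
  convert hasSum_sum_of_ne_finset_zero (L := SummationFilter.unconditional ℕ) (s := range k)
    (f := fun n => if n < k then c else 0) (fun n hn => if_neg (by simpa using hn))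
  rw [sum_ite_of_true fun n hn => mem_range.mp hn, sum_const, card_range]

variable [CompleteSpace E]

theorem Summable.of_summable_natCast_mul_norm {f : ℕ → E}
    (hf : Summable fun k : ℕ => (k : ℝ) * ‖f k‖) : Summable f := by
  refine (summable_nat_add_iff 1).mp
    ((hf.comp_injective (add_left_injective 1)).of_norm_bounded fun k => ?_)
  simp only [Function.comp_apply, Nat.cast_add, Nat.cast_one]
  nlinarith [norm_nonneg (f (k + 1)), (Nat.cast_nonneg k : (0 : ℝ) ≤ k)]

theorem hasSum_tsum_sub_sum_range_succ {f : ℕ → E}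
    (hf : Summable fun k : ℕ => (k : ℝ) * ‖f k‖) :
    HasSum (fun n => ∑' k, f k - ∑ k ∈ range (n + 1), f k) (∑' k, k • f k) := by
  -- Row `k` of `F` sums to `k • f k`, column `n` to the `n`-th tail.
  let F : ℕ × ℕ → E := fun p => if p.2 < p.1 then f p.1 else 0
  have hrow (k : ℕ) : HasSum (fun n => F (k, n)) (k • f k) := hasSum_ite_lt k (f k)
  have hcol (n : ℕ) :
      HasSum (fun k => F (k, n)) (∑' k, f k - ∑ k ∈ range (n + 1), f k) := by
    have htail := (hasSum_nat_add_iff' (n + 1)).mpr hf.of_summable_natCast_mul_norm.hasSum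
    refine (hasSum_nat_add_iff' (n + 1)).mp ?_
    rw [sum_eq_zero fun i hi => if_neg (by simp at hi; omega), sub_zero]
    convert htail using 2 with k
    exact if_pos (by omega)
  have hnorm : Summable fun p : ℕ × ℕ => if p.2 < p.1 then ‖f p.1‖ else 0 := by
    refine (summable_prod_of_nonneg fun p => ?_).mpr ⟨fun k => ?_, ?_⟩
    · dsimp only; split_ifs <;> simp
    · exact (hasSum_ite_lt k ‖f k‖).summable
    · simpa only [(hasSum_ite_lt _ _).tsum_eq, nsmul_eq_mul] using hf
  have hF : Summable F := by
    refine hnorm.of_norm_bounded fun p => ?_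
    dsimp only [F]; split_ifs <;> simp
  rw [(hF.hasSum.prod_fiberwise hrow).tsum_eq]
  exact ((Equiv.prodComm ℕ ℕ).hasSum_iff.mpr hF.hasSum).prod_fiberwise hcol

end Tails

def dterm (lam y : ℝ) (k : ℕ) : ℝ := dff lam 1 k * y ^ k / k.factorial

section DegenerateExponential

variable {lam y : ℝ}

theorem natCast_succ_mul_dterm_succ (k : ℕ) :
    ((k : ℝ) + 1) * dterm lam y (k + 1) = (1 - k * lam) * y * dterm lam y k := by
  simp only [dterm, dff, Finset.prod_range_succ, Nat.factorial_succ, Nat.cast_mul, pow_succ]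
  generalize ∏ i ∈ Finset.range k, (1 - (i : ℝ) * lam) = P
  have := k.factorial_pos
  field_simp
  push_cast
  ring

theorem summable_natCast_mul_dterm (hy : |lam * y| < 1) :
    Summable fun k : ℕ => (k : ℝ) * dterm lam y k := by
  set r := |lam * y|
  obtain ⟨N, hN⟩ := exists_nat_gt (2 * |y| / (1 - r))
  refine summable_of_ratio_norm_eventually_le (r := (1 + r) / 2) (by linarith) ?_
  filter_upwards [Filter.eventually_ge_atTop N] with k hk
  have hyk : 2 * |y| < (1 - r) * k := by
    rw [div_lt_iff₀ (by linarith)] at hN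
    nlinarith [(Nat.cast_le (α := ℝ)).mpr hk]
  have hr : |(1 - k * lam) * y| ≤ |y| + k * r := by
    calc |(1 - k * lam) * y| = |y - k * (lam * y)| := by ring_nf
      _ ≤ |y| + |k * (lam * y)| := abs_sub _ _
      _ = |y| + k * r := by rw [abs_mul, Nat.abs_cast]
  calc ‖((k + 1 : ℕ) : ℝ) * dterm lam y (k + 1)‖
      _ = |(1 - k * lam) * y| * |dterm lam y k| := by
        rw [Nat.cast_succ, natCast_succ_mul_dterm_succ, Real.norm_eq_abs, abs_mul]
      _ ≤ (|y| + k * r) * |dterm lam y k| := by gcongr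
      _ ≤ (1 + r) / 2 * ‖(k : ℝ) * dterm lam y k‖ := by
        rw [Real.norm_eq_abs, abs_mul, Nat.abs_cast]
        nlinarith [abs_nonneg (dterm lam y k)]

theorem summable_natCast_mul_norm_dterm (hy : |lam * y| < 1) :
    Summable fun k : ℕ => (k : ℝ) * ‖dterm lam y k‖ := by
  simpa only [norm_mul, Real.norm_natCast] using (summable_natCast_mul_dterm hy).norm

theorem hasSum_dterm (hy : |lam * y| < 1) : HasSum (dterm lam y) (dexp lam y) :=
  (summable_natCast_mul_norm_dterm hy).of_summable_natCast_mul_norm.hasSum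

theorem tsum_natCast_mul_dterm (hy : |lam * y| < 1) :
    ∑' k : ℕ, (k : ℝ) * dterm lam y k = y / (1 + lam * y) * dexp lam y := by
  set S := ∑' k : ℕ, (k : ℝ) * dterm lam y k
  have hsum := summable_natCast_mul_dterm hy
  have hshift : HasSum (fun k : ℕ => ((k : ℝ) + 1) * dterm lam y (k + 1)) S := by
    simpa using (hasSum_nat_add_iff' 1).mpr hsum.hasSum
  have hrec : HasSum (fun k : ℕ => ((k : ℝ) + 1) * dterm lam y (k + 1))
      (y * dexp lam y - lam * y * S) := by
    simp_rw [natCast_succ_mul_dterm_succ]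
    exact (((hasSum_dterm hy).mul_left y).sub (hsum.hasSum.mul_left (lam * y))).congr_fun
      fun k => by ring
  have hpos : 0 < 1 + lam * y := by linarith [neg_abs_le (lam * y)]
  rw [div_mul_eq_mul_div, eq_div_iff hpos.ne']
  linarith [hshift.unique hrec]

end DegenerateExponential

theorem stmt_1 (lam y : ℝ) (hy : |lam * y| < 1) :
    HasSum (fun n : ℕ => dtail lam y n) (y / (1 + lam * y) * dexp lam y) := by
  have h := hasSum_tsum_sub_sum_range_succ (summable_natCast_mul_norm_dterm hy)
  simp_rw [nsmul_eq_mul, tsum_natCast_mul_dterm hy] at h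
  exact h
end
end

section
/- For every real λ with |λ| < 1 and every real x with x ≠ 1 and |λx| < 1, one has Σ_{n=1}^∞ T_n(1) x^n = (e_λ(x) − x e_λ(1))/(x − 1) + 1, where the series on the left converges. -/
/-!
Write `a_k = (1)_{k,λ} / k!`, so that `T_n - T_{n+1} = a_{n+1}`. Multiplying the partial sums by
`x - 1` then telescopes:
`(x - 1) ∑_{n=1}^N T_n x^n = T_N x^{N+1} - T_0 x + ∑_{k=1}^N a_k x^k`.
Since `a_{k+1} / a_k = (1 - kλ) / (k + 1) → -λ`, the coefficients are eventually `O(ρ^k)` for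
every `ρ > |λ|`; choosing `ρ < 1` with `ρ |x| < 1` makes `T_n x^n` summable, so `T_N x^N → 0`,
and the limit of the right-hand side is `e_λ(x) - x e_λ(1) + (x - 1)`.
-/

noncomputable section

open Filter Topology Finset

theorem sub_one_mul_sum_tail_mul_pow {R : Type*} [CommRing R] {a t : ℕ → R}
    (ht : ∀ n, t n = t (n + 1) + a (n + 1)) (x : R) (N : ℕ) :
    (x - 1) * ∑ n ∈ range N, t (n + 1) * x ^ (n + 1) =
      t N * x ^ (N + 1) - t 0 * x + ∑ n ∈ range N, a (n + 1) * x ^ (n + 1) := by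
  induction N with
  | zero => simp
  | succ N ih =>
    rw [sum_range_succ, sum_range_succ, mul_add, ih, ht N]
    ring

theorem hasSum_tail_mul_pow_s2 {𝕜 : Type*} [NormedField 𝕜] {a t : ℕ → 𝕜} {A B x : 𝕜} (hx : x ≠ 1)
    (ht : ∀ n, t n = A - ∑ k ∈ range (n + 1), a k) (hB : HasSum (fun k => a k * x ^ k) B)
    (hs : Summable fun n => t n * x ^ n) :
    HasSum (fun n => t (n + 1) * x ^ (n + 1)) ((B - x * A) / (x - 1) + a 0) := by
  have hx1 : x - 1 ≠ 0 := sub_ne_zero.2 hx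
  have hstep : ∀ n, t n = t (n + 1) + a (n + 1) := fun n => by
    rw [ht, ht, sum_range_succ _ (n + 1)]; ring
  have hB' : HasSum (fun n => a (n + 1) * x ^ (n + 1)) (B - a 0) := by
    simpa using (hasSum_nat_add_iff' 1).2 hB
  have hlim := ((hs.tendsto_atTop_zero.mul_const x).sub_const (t 0 * x)).add hB'.tendsto_sum_nat
  rw [((summable_nat_add_iff 1).2 hs).hasSum_iff_tendsto_nat]
  convert hlim.div_const (x - 1) using 1
  · funext N
    rw [mul_assoc, ← pow_succ, ← sub_one_mul_sum_tail_mul_pow hstep, mul_div_cancel_left₀ _ hx1]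
  · rw [ht 0, sum_range_one]
    field_simp
    congr 1
    ring

theorem exists_eventually_norm_le_geometric_of_ratio {E : Type*} [SeminormedAddCommGroup E]
    {f : ℕ → E} {r : ℝ} (hr : 0 < r) (h : ∀ᶠ n in atTop, ‖f (n + 1)‖ ≤ r * ‖f n‖) :
    ∃ C, ∀ᶠ n in atTop, ‖f n‖ ≤ C * r ^ n := by
  obtain ⟨N, hN⟩ := eventually_atTop.1 h
  refine ⟨‖f N‖ / r ^ N, eventually_atTop.2 ⟨N, fun n hn => ?_⟩⟩
  obtain ⟨m, rfl⟩ := Nat.exists_eq_add_of_le hn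
  calc ‖f (N + m)‖ ≤ r ^ m * ‖f N‖ :=
        le_geom (u := fun k => ‖f (N + k)‖) hr.le m fun k _ => hN (N + k) (by omega)
    _ = ‖f N‖ / r ^ N * r ^ (N + m) := by
        rw [pow_add]; field_simp

def dexpCoeff (lam : ℝ) (k : ℕ) : ℝ := dff lam 1 k / k.factorial

theorem dexpCoeff_zero (lam : ℝ) : dexpCoeff lam 0 = 1 := by simp [dexpCoeff, dff]

theorem dexpCoeff_succ (lam : ℝ) (k : ℕ) :
    dexpCoeff lam (k + 1) = (1 - k * lam) / (k + 1) * dexpCoeff lam k := by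
  simp only [dexpCoeff, dff, prod_range_succ, Nat.factorial_succ]
  push_cast
  rw [div_mul_div_comm]
  ring

theorem tendsto_abs_dexpCoeff_ratio (lam : ℝ) :
    Tendsto (fun k : ℕ => |1 - k * lam| / (k + 1)) atTop (𝓝 |lam|) := by
  have h : Tendsto (fun k : ℕ => (1 + lam) * (1 / ((k : ℝ) + 1)) - lam) atTop
      (𝓝 ((1 + lam) * 0 - lam)) :=
    (tendsto_one_div_add_atTop_nhds_zero_nat.const_mul _).sub_const _
  rw [mul_zero, zero_sub] at h
  refine (abs_neg lam ▸ h.abs).congr fun k => ?_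
  have hk : (0 : ℝ) < k + 1 := by positivity
  rw [← abs_of_pos hk, ← abs_div, abs_of_pos hk]
  congr 1
  field_simp
  ring

theorem dexpCoeff_eventually_abs_le_geometric {lam ρ : ℝ} (hρ : |lam| < ρ) :
    ∃ C, ∀ᶠ k in atTop, |dexpCoeff lam k| ≤ C * ρ ^ k := by
  refine exists_eventually_norm_le_geometric_of_ratio (f := dexpCoeff lam)
    ((abs_nonneg lam).trans_lt hρ) ?_
  filter_upwards [(tendsto_abs_dexpCoeff_ratio lam).eventually (ge_mem_nhds hρ)] with k hk
  rw [dexpCoeff_succ, Real.norm_eq_abs, Real.norm_eq_abs, abs_mul, abs_div,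
    abs_of_pos (by positivity : (0 : ℝ) < k + 1)]
  exact mul_le_mul_of_nonneg_right hk (abs_nonneg _)

theorem hasSum_dexp {lam y : ℝ} (hy : |lam * y| < 1) :
    HasSum (fun k => dexpCoeff lam k * y ^ k) (dexp lam y) := by
  have hsum : Summable fun k => dexpCoeff lam k * y ^ k := by
    obtain ⟨r, hlr, hr1⟩ := exists_between hy
    have hratio : Tendsto (fun k : ℕ => |1 - k * lam| / (k + 1) * |y|) atTop (𝓝 |lam * y|) := by
      rw [abs_mul]; exact (tendsto_abs_dexpCoeff_ratio lam).mul_const _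
    refine summable_of_ratio_norm_eventually_le hr1 ?_
    filter_upwards [hratio.eventually (ge_mem_nhds hlr)] with k hk
    rw [dexpCoeff_succ, Real.norm_eq_abs, Real.norm_eq_abs, abs_mul, abs_mul, abs_mul, abs_div,
      abs_of_pos (by positivity : (0 : ℝ) < k + 1), abs_pow, abs_pow, pow_succ]
    calc |1 - k * lam| / (k + 1) * |dexpCoeff lam k| * (|y| ^ k * |y|)
        = |1 - k * lam| / (k + 1) * |y| * (|dexpCoeff lam k| * |y| ^ k) := by ring
      _ ≤ r * (|dexpCoeff lam k| * |y| ^ k) := by gcongr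
  convert hsum.hasSum using 1
  exact tsum_congr fun k => (mul_div_right_comm _ _ _)

theorem dtail_one_eq (lam : ℝ) (n : ℕ) :
    dtail lam 1 n = dexp lam 1 - ∑ k ∈ range (n + 1), dexpCoeff lam k := by
  simp [dtail, dexpCoeff]

theorem hasSum_dtail_one {lam : ℝ} (hl : |lam| < 1) (n : ℕ) :
    HasSum (fun k => dexpCoeff lam (k + (n + 1))) (dtail lam 1 n) := by
  rw [dtail_one_eq, hasSum_nat_add_iff']
  simpa using hasSum_dexp (y := 1) (by simpa using hl)

theorem dtail_one_eventually_abs_le {lam ρ C : ℝ} (hl : |lam| < 1) (hρ0 : 0 ≤ ρ) (hρ1 : ρ < 1)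
    (hC : ∀ᶠ k in atTop, |dexpCoeff lam k| ≤ C * ρ ^ k) :
    ∀ᶠ n in atTop, |dtail lam 1 n| ≤ C * ρ ^ (n + 1) / (1 - ρ) := by
  obtain ⟨N, hN⟩ := eventually_atTop.1 hC
  filter_upwards [eventually_ge_atTop N] with n hn
  have hgeom := (hasSum_geometric_of_lt_one hρ0 hρ1).mul_left (C * ρ ^ (n + 1))
  rw [← div_eq_mul_inv] at hgeom
  refine (hasSum_dtail_one hl n).norm_le_of_bounded hgeom fun k => ?_
  rw [mul_assoc, ← pow_add, add_comm (n + 1)]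
  exact hN _ (by omega)

theorem summable_dtail_one_mul_pow {lam x : ℝ} (hl : |lam| < 1) (hlx : |lam * x| < 1) :
    Summable fun n => dtail lam 1 n * x ^ n := by
  have hρ : ∀ᶠ ρ in 𝓝 |lam|, ρ < 1 ∧ ρ * |x| < 1 :=
    (eventually_lt_nhds hl).and <| (continuous_mul_const |x|).continuousAt.eventually_lt
      continuousAt_const (by rwa [← abs_mul])
  obtain ⟨ρ, hlρ, hρ1, hρx⟩ := hρ.exists_gt
  have hρ0 : 0 ≤ ρ := (abs_nonneg lam).trans hlρ.le
  obtain ⟨C, hC⟩ := dexpCoeff_eventually_abs_le_geometric hlρ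
  refine .of_norm_bounded_eventually_nat
    ((summable_geometric_of_lt_one (by positivity) hρx).mul_left (C * ρ / (1 - ρ))) ?_
  filter_upwards [dtail_one_eventually_abs_le hl hρ0 hρ1 hC] with n hn
  rw [Real.norm_eq_abs, abs_mul, abs_pow]
  calc |dtail lam 1 n| * |x| ^ n ≤ C * ρ ^ (n + 1) / (1 - ρ) * |x| ^ n := by gcongr
    _ = C * ρ / (1 - ρ) * (ρ * |x|) ^ n := by ring

theorem stmt_2 (lam x : ℝ) (hl : |lam| < 1) (hx : x ≠ 1) (hlx : |lam * x| < 1) :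
    HasSum (fun n : ℕ => dtail lam 1 (n + 1) * x ^ (n + 1))
      ((dexp lam x - x * dexp lam 1) / (x - 1) + 1) := by
  simpa [dexpCoeff_zero] using hasSum_tail_mul_pow_s2 hx (dtail_one_eq lam) (hasSum_dexp hlx)
    (summable_dtail_one_mul_pow hl hlx)
end
end

section
/- For every real λ with |λ| < 1, one has Σ_{n=1}^∞ (−1)^n T_n(1) = 1 − cosh_λ(1), where cosh_λ(x) = (e_λ(x) + e_λ(−x))/2 is the degenerate hyperbolic cosine and the series on the left converges. -/
/-!
Put `a k = (1)_{k,λ} / k!` (`dcoeff`), so that `T_n(1) = ∑_{k > n} a k`. For `k ≥ 1` the ratio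
`|a (k+1) / a k| = |1 - kλ| / (k + 1)` is at most `(1 + |λ|) / 2 < 1`, so the `a k` decay
geometrically and the tails `T_n(1)` are absolutely summable. Grouping the alternating series in
consecutive pairs gives `-T_{2k+1}(1) + T_{2k+2}(1) = -a (2k+2)`, and `∑ a (2k) = cosh_λ(1)`.
-/

noncomputable section

open Finset

theorem hasSum_neg_one_pow_mul_tail {a : ℕ → ℝ} {s x : ℝ}
    (htail : Summable fun n => s - ∑ k ∈ range (n + 1), a k)
    (hx : HasSum (fun k => -a (2 * k + 2)) x) :
    HasSum (fun n => (-1) ^ (n + 1) * (s - ∑ k ∈ range (n + 2), a k)) x := by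
  set F := fun n : ℕ => (-1 : ℝ) ^ (n + 1) * (s - ∑ k ∈ range (n + 2), a k)
  have hF : Summable F := by
    refine summable_abs_iff.mp ?_
    simpa [F, abs_mul] using (htail.comp_injective (add_left_injective 1)).abs
  obtain ⟨u, he⟩ : Summable fun k => F (2 * k) :=
    hF.comp_injective (mul_right_injective₀ two_ne_zero)
  obtain ⟨v, ho⟩ : Summable fun k => F (2 * k + 1) :=
    hF.comp_injective ((add_left_injective 1).comp (mul_right_injective₀ two_ne_zero))
  have hpair : ∀ k, F (2 * k) + F (2 * k + 1) = -a (2 * k + 2) := by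
    intro k
    simp only [F, sum_range_succ, pow_succ, pow_mul]
    ring
  have hx' : HasSum (fun k => -a (2 * k + 2)) (u + v) := by
    simpa only [hpair] using he.add ho
  exact hx'.unique hx ▸ he.even_add_odd ho

theorem hasSum_comp_two_mul {a : ℕ → ℝ} {s s' : ℝ} (hs : HasSum a s)
    (hs' : HasSum (fun k => (-1) ^ k * a k) s') :
    HasSum (fun k => a (2 * k)) ((s + s') / 2) := by
  have hinj : Function.Injective (fun k : ℕ => 2 * k) := mul_right_injective₀ two_ne_zero
  have hodd : ∀ n ∉ Set.range (fun k : ℕ => 2 * k), (a n + (-1) ^ n * a n) / 2 = 0 := by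
    intro n hn
    have : Odd n := Nat.not_even_iff_odd.mp fun ⟨m, hm⟩ => hn ⟨m, by simp only; omega⟩
    simp [this.neg_one_pow]
  have h := (hinj.hasSum_iff hodd).mpr ((hs.add hs').div_const 2)
  convert h using 2 with k
  simp [pow_mul]

theorem norm_tsum_nat_add_le_of_abs_le_geometric {a : ℕ → ℝ} {C r : ℝ} (hr0 : 0 ≤ r)
    (hr1 : r < 1) (ha : ∀ k, |a k| ≤ C * r ^ k) (n : ℕ) :
    ‖∑' k, a (k + n)‖ ≤ C * r ^ n * (1 - r)⁻¹ :=
  tsum_of_norm_bounded ((hasSum_geometric_of_lt_one hr0 hr1).mul_left (C * r ^ n)) fun k => by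
    simpa [pow_add, mul_comm, mul_left_comm, mul_assoc] using ha (k + n)

theorem summable_tsum_nat_add_of_abs_le_geometric {a : ℕ → ℝ} {C r : ℝ} (hr0 : 0 ≤ r)
    (hr1 : r < 1) (ha : ∀ k, |a k| ≤ C * r ^ k) :
    Summable fun n => ∑' k, a (k + n) :=
  .of_norm_bounded (((summable_geometric_of_lt_one hr0 hr1).mul_left C).mul_right (1 - r)⁻¹)
    (norm_tsum_nat_add_le_of_abs_le_geometric hr0 hr1 ha)

def dcoeff (lam : ℝ) (k : ℕ) : ℝ := dff lam 1 k / k.factorial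

@[simp]
theorem dcoeff_zero (lam : ℝ) : dcoeff lam 0 = 1 := by
  simp [dcoeff, dff]

theorem dexp_eq_tsum (lam y : ℝ) : dexp lam y = ∑' k, dcoeff lam k * y ^ k := by
  simp only [dexp, dcoeff, div_mul_eq_mul_div]

theorem dtail_one (lam : ℝ) (n : ℕ) :
    dtail lam 1 n = dexp lam 1 - ∑ k ∈ range (n + 1), dcoeff lam k := by
  simp [dtail, dcoeff]

theorem dcoeff_succ (lam : ℝ) (k : ℕ) :
    dcoeff lam (k + 1) = dcoeff lam k * (1 - k * lam) / (k + 1) := by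
  rw [dcoeff, dcoeff, dff, prod_range_succ, ← dff, Nat.factorial_succ, Nat.cast_mul]
  push_cast
  field_simp

theorem abs_dcoeff_succ_le {lam : ℝ} (hl : |lam| ≤ 1) {k : ℕ} (hk : 1 ≤ k) :
    |dcoeff lam (k + 1)| ≤ (1 + |lam|) / 2 * |dcoeff lam k| := by
  have hk' : (1 : ℝ) ≤ k := by exact_mod_cast hk
  have h : |1 - k * lam| ≤ (1 + |lam|) / 2 * (k + 1) :=
    calc |1 - k * lam| ≤ 1 + k * |lam| := by
          simpa [abs_mul] using abs_sub (1 : ℝ) (k * lam)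
      _ ≤ (1 + |lam|) / 2 * (k + 1) := by nlinarith
  rw [dcoeff_succ, abs_div, abs_mul, abs_of_pos (by positivity : (0 : ℝ) < k + 1),
    div_le_iff₀ (by positivity)]
  nlinarith [abs_nonneg (dcoeff lam k)]

theorem abs_dcoeff_succ_le_pow {lam : ℝ} (hl : |lam| ≤ 1) (k : ℕ) :
    |dcoeff lam (k + 1)| ≤ ((1 + |lam|) / 2) ^ k := by
  induction k with
  | zero => simp [dcoeff_succ]
  | succ k ih =>
    calc |dcoeff lam (k + 2)| ≤ (1 + |lam|) / 2 * |dcoeff lam (k + 1)| :=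
          abs_dcoeff_succ_le hl (by omega)
      _ ≤ ((1 + |lam|) / 2) ^ (k + 1) := by
          rw [pow_succ']; gcongr

theorem abs_dcoeff_le {lam : ℝ} (hl : |lam| ≤ 1) (k : ℕ) :
    |dcoeff lam k| ≤ 2 * ((1 + |lam|) / 2) ^ k := by
  rcases k with _ | k
  · norm_num
  · calc |dcoeff lam (k + 1)| ≤ ((1 + |lam|) / 2) ^ k := abs_dcoeff_succ_le_pow hl k
      _ ≤ 2 * ((1 + |lam|) / 2) ^ (k + 1) := by
          rw [pow_succ, ← mul_assoc, mul_comm 2, mul_assoc]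
          have : 0 ≤ ((1 + |lam|) / 2) ^ k := by positivity
          nlinarith [abs_nonneg lam]

theorem stmt_4 (lam : ℝ) (hl : |lam| < 1) :
    HasSum (fun n : ℕ => (-1 : ℝ) ^ (n + 1) * dtail lam 1 (n + 1))
      (1 - (dexp lam 1 + dexp lam (-1)) / 2) := by
  have hr0 : 0 ≤ (1 + |lam|) / 2 := by positivity
  have hr1 : (1 + |lam|) / 2 < 1 := by linarith
  have hbound := abs_dcoeff_le hl.le
  have hsum : Summable (dcoeff lam) :=
    .of_norm_bounded ((summable_geometric_of_lt_one hr0 hr1).mul_left 2) hbound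
  have htail : Summable fun n => dexp lam 1 - ∑ k ∈ range (n + 1), dcoeff lam k := by
    have h := (summable_tsum_nat_add_of_abs_le_geometric hr0 hr1 hbound).comp_injective
      (add_left_injective 1)
    refine h.congr fun n => ?_
    simp only [Function.comp_apply, dexp_eq_tsum, one_pow, mul_one,
      ← hsum.sum_add_tsum_nat_add (n + 1), add_sub_cancel_left]
  have hcosh : HasSum (fun k => dcoeff lam (2 * k)) ((dexp lam 1 + dexp lam (-1)) / 2) := by
    refine hasSum_comp_two_mul ?_ ?_
    · simpa [dexp_eq_tsum] using hsum.hasSum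
    · have hsum' : Summable fun k => (-1) ^ k * dcoeff lam k :=
        .of_norm_bounded hsum.norm fun k => by simp
      simpa [dexp_eq_tsum, mul_comm] using hsum'.hasSum
  have hx : HasSum (fun k => -dcoeff lam (2 * k + 2))
      (1 - (dexp lam 1 + dexp lam (-1)) / 2) := by
    simpa [mul_add] using ((hasSum_nat_add_iff' 1).mpr hcosh).neg
  simpa only [dtail_one] using hasSum_neg_one_pow_mul_tail htail hx
end
end

section
/- For every natural number p and every real λ with |λ| < 1, one has Σ_{n=0}^∞ C(n,p) T_n(1) = ((1)_{p+1,λ}/(p+1)!) (1+λ)^{−(p+1)} e_λ(1), where C(n,p) is the binomial coefficient and the series on the left converges. -/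
noncomputable section

/-- auxiliary sum -/
def Saux (lam x : ℝ) : ℝ := ∑' m : ℕ, dff lam x m / m.factorial

lemma key_summable (lam : ℝ) (hl : |lam| < 1) (x : ℝ) (q : ℕ) :
    Summable (fun m : ℕ => (m.choose q : ℝ) * |dff lam x m| / m.factorial) := by
  set r : ℝ := (1 + |lam|) / 2 with hr
  have h0 : 0 ≤ |lam| := abs_nonneg lam
  have hr1 : r < 1 := by rw [hr]; linarith
  have hlr : |lam| < r := by rw [hr]; linarith
  apply summable_of_ratio_norm_eventually_le hr1
  obtain ⟨M, hM⟩ := exists_nat_ge ((|x| + r * (q + 1)) / (r - |lam|))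
  rw [Filter.eventually_atTop]
  refine ⟨max M q, fun m hm => ?_⟩
  have hmq : q ≤ m := le_trans (le_max_right _ _) hm
  have hmM : (M : ℝ) ≤ m := Nat.cast_le.mpr (le_trans (le_max_left _ _) hm)
  have hfact_pos : (0:ℝ) < m.factorial := by positivity
  have hkey : |x - m * lam| ≤ r * ((m:ℝ) + 1 - q) := by
    have h1 : |x - m*lam| ≤ |x| + m * |lam| := by
      calc |x - m*lam| ≤ |x| + |(m:ℝ)*lam| := abs_sub _ _
        _ = |x| + m * |lam| := by rw [abs_mul, Nat.abs_cast]
    have h2 : (|x| + r*(q+1)) ≤ M * (r - |lam|) := by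
      rw [div_le_iff₀ (by linarith)] at hM; linarith
    have h3 : (M:ℝ) * (r - |lam|) ≤ m * (r - |lam|) :=
      mul_le_mul_of_nonneg_right hmM (by linarith)
    nlinarith
  have hnn : ∀ n : ℕ, (0:ℝ) ≤ (n.choose q : ℝ) * |dff lam x n| / n.factorial := by
    intro n; positivity
  rw [Real.norm_of_nonneg (hnn _), Real.norm_of_nonneg (hnn _)]
  have hd : |dff lam x (m+1)| = |dff lam x m| * |x - m*lam| := by
    rw [dff, dff, Finset.prod_range_succ, abs_mul]
  have hfact : ((m+1).factorial : ℝ) = ((m:ℝ)+1) * m.factorial := by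
    rw [Nat.factorial_succ]; push_cast; ring
  have hch : (m.choose q : ℝ) * ((m:ℝ)+1) = ((m+1).choose q : ℝ) * ((m:ℝ)+1-q) := by
    have h := Nat.choose_mul_succ_eq m q
    have hc : ((m+1-q:ℕ):ℝ) = (m:ℝ)+1-q := by
      rw [Nat.cast_sub (by omega)]; push_cast; ring
    calc (m.choose q : ℝ) * ((m:ℝ)+1) = ((m.choose q * (m+1) : ℕ) : ℝ) := by push_cast; ring
      _ = (((m+1).choose q * (m+1-q) : ℕ) : ℝ) := by rw [h]
      _ = ((m+1).choose q : ℝ) * ((m:ℝ)+1-q) := by push_cast [hc]; ring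
  have hm1 : (0:ℝ) < (m:ℝ) + 1 := by positivity
  calc ((m+1).choose q : ℝ) * |dff lam x (m+1)| / (m+1).factorial
      = ((m+1).choose q : ℝ) * |dff lam x m| * |x - m*lam| / (((m:ℝ)+1) * m.factorial) := by
        rw [hd, hfact]; ring
    _ ≤ ((m+1).choose q : ℝ) * |dff lam x m| * (r * ((m:ℝ)+1-q)) / (((m:ℝ)+1) * m.factorial) := by
        gcongr
    _ = (r * ((m.choose q : ℝ) * ((m:ℝ)+1)) * |dff lam x m|) / (((m:ℝ)+1) * m.factorial) := by
        rw [hch]; ring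
    _ = r * ((m.choose q : ℝ) * |dff lam x m| / m.factorial) := by
        field_simp

lemma summable_choose_mul (lam : ℝ) (hl : |lam| < 1) (x : ℝ) (q : ℕ) :
    Summable fun k : ℕ => (k.choose q : ℝ) * (dff lam x k / k.factorial) := by
  rw [← summable_abs_iff]
  refine (key_summable lam hl x q).congr fun k => ?_
  rw [abs_mul, abs_div, Nat.abs_cast, Nat.abs_cast, mul_div_assoc]

lemma summable_S (lam : ℝ) (hl : |lam| < 1) (x : ℝ) :
    Summable fun m : ℕ => dff lam x m / m.factorial := by
  have := summable_choose_mul lam hl x 0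
  simpa using this

lemma dff_succ_left (lam x : ℝ) (m : ℕ) :
    dff lam x (m+1) = x * dff lam (x - lam) m := by
  rw [dff, dff, Finset.prod_range_succ']
  simp only [Nat.cast_zero, zero_mul, sub_zero]
  rw [mul_comm]
  congr 1
  refine Finset.prod_congr rfl fun i _ => ?_
  push_cast; ring

lemma S_rec (lam : ℝ) (hl : |lam| < 1) (x : ℝ) :
    Saux lam x = (1 + lam) * Saux lam (x - lam) := by
  set u : ℕ → ℝ := fun m => dff lam (x - lam) m / m.factorial with hu_def
  have hu : Summable u := summable_S lam hl (x - lam)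
  set w : ℕ → ℝ := fun m => Nat.rec 0 (fun n _ => u n) m with hw_def
  have hw : Summable w := by
    rw [← summable_nat_add_iff 1]
    exact hu
  have hws : ∑' m, w m = Saux lam (x - lam) := by
    rw [Summable.tsum_eq_zero_add hw]
    simp [hw_def, hu_def, Saux]
  have hpt : ∀ m : ℕ, dff lam x m / m.factorial = u m + lam * w m := by
    intro m
    cases m with
    | zero => simp [dff, u, w]
    | succ n =>
      have h1 : dff lam x (n+1) = x * dff lam (x - lam) n := dff_succ_left lam x n
      have h2 : dff lam (x - lam) (n+1) = dff lam (x - lam) n * (x - lam - n * lam) := by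
        rw [dff, Finset.prod_range_succ]; rfl
      have h3 : ((n+1).factorial : ℝ) = ((n:ℝ)+1) * n.factorial := by
        rw [Nat.factorial_succ]; push_cast; ring
      have hfpos : (0:ℝ) < n.factorial := by positivity
      show dff lam x (n+1) / (n+1).factorial = u (n+1) + lam * u n
      rw [h1, hu_def]
      simp only []
      rw [h2, h3]
      field_simp
      ring
  have : Saux lam x = ∑' m, (u m + lam * w m) := by
    rw [Saux]; exact tsum_congr hpt
  rw [this, Summable.tsum_add hu (hw.mul_left lam), tsum_mul_left, hws]
  rw [Saux] at *
  ring

lemma S_one (lam : ℝ) : Saux lam 1 = dexp lam 1 := by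
  simp [Saux, dexp]

lemma S_steps (lam : ℝ) (hl : |lam| < 1) (q : ℕ) :
    Saux lam (1 - q * lam) * (1 + lam) ^ q = dexp lam 1 := by
  induction q with
  | zero => simpa using S_one lam
  | succ n ih =>
    have hx : (1:ℝ) - (n+1 : ℕ) * lam = (1 - (n:ℕ) * lam) - lam := by push_cast; ring
    have hrec := S_rec lam hl (1 - (n:ℕ) * lam)
    rw [hx, pow_succ]
    calc Saux lam ((1 - (n:ℕ)*lam) - lam) * ((1+lam)^n * (1+lam))
        = ((1+lam) * Saux lam ((1 - (n:ℕ)*lam) - lam)) * (1+lam)^n := by ring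
      _ = Saux lam (1 - (n:ℕ)*lam) * (1+lam)^n := by rw [← hrec]
      _ = dexp lam 1 := ih

lemma dff_add (lam x : ℝ) (a b : ℕ) :
    dff lam x (a + b) = dff lam x a * dff lam (x - a * lam) b := by
  rw [dff, dff, dff, Finset.prod_range_add]
  congr 1
  refine Finset.prod_congr rfl fun i _ => ?_
  push_cast; ring

lemma hockey (p k : ℕ) : ∑ n ∈ Finset.range k, n.choose p = k.choose (p+1) := by
  induction k with
  | zero => simp
  | succ n ih => rw [Finset.sum_range_succ, ih, Nat.choose_succ_succ, Nat.add_comm]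

lemma final_sum (p : ℕ) (lam : ℝ) (hl : |lam| < 1) :
    ∑' k : ℕ, (k.choose (p+1) : ℝ) * (dff lam 1 k / k.factorial)
      = dff lam 1 (p + 1) / (p + 1).factorial * (1 + lam) ^ (-(p + 1 : ℤ)) * dexp lam 1 := by
  have hpos : (0:ℝ) < 1 + lam := by
    have := abs_lt.mp hl; linarith [this.1]
  have hsum := summable_choose_mul lam hl 1 (p+1)
  have hsplit := Summable.sum_add_tsum_nat_add (p+1) hsum
  have hz : ∑ k ∈ Finset.range (p+1), (k.choose (p+1) : ℝ) * (dff lam 1 k / k.factorial) = 0 := by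
    apply Finset.sum_eq_zero
    intro k hk
    rw [Finset.mem_range] at hk
    rw [Nat.choose_eq_zero_of_lt hk]
    simp
  have hterm : ∀ m : ℕ, ((m + (p+1)).choose (p+1) : ℝ) * (dff lam 1 (m + (p+1)) / (m + (p+1)).factorial)
      = (dff lam 1 (p+1) / (p+1).factorial) * (dff lam (1 - (p+1 : ℕ) * lam) m / m.factorial) := by
    intro m
    have hle : p + 1 ≤ m + (p+1) := by omega
    have hfac := Nat.choose_mul_factorial_mul_factorial hle
    have hmsub : m + (p+1) - (p+1) = m := by omega
    rw [hmsub] at hfac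
    have hdff : dff lam 1 (m + (p+1)) = dff lam 1 (p+1) * dff lam (1 - (p+1:ℕ) * lam) m := by
      rw [Nat.add_comm m (p+1)]
      exact dff_add lam 1 (p+1) m
    have hfp : (0:ℝ) < (p+1).factorial := by positivity
    have hfm : (0:ℝ) < m.factorial := by positivity
    have hftot : (((m+(p+1)).factorial : ℕ) : ℝ)
        = ((m+(p+1)).choose (p+1) : ℝ) * (p+1).factorial * m.factorial := by
      exact_mod_cast hfac.symm
    have hchpos : (0:ℝ) < ((m+(p+1)).choose (p+1) : ℝ) := by
      exact_mod_cast Nat.choose_pos hle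
    rw [hdff, hftot]
    field_simp
  have htail : ∑' m : ℕ, ((m + (p+1)).choose (p+1) : ℝ) * (dff lam 1 (m + (p+1)) / (m + (p+1)).factorial)
      = (dff lam 1 (p+1) / (p+1).factorial) * Saux lam (1 - (p+1 : ℕ) * lam) := by
    rw [tsum_congr hterm, tsum_mul_left, Saux]
  have hS : Saux lam (1 - (p+1 : ℕ) * lam) = dexp lam 1 * ((1+lam)^(p+1))⁻¹ := by
    have := S_steps lam hl (p+1)
    have hne : ((1:ℝ)+lam)^(p+1) ≠ 0 := by positivity
    field_simp at this ⊢
    linarith [this]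
  have hzpow : ((1:ℝ) + lam) ^ (-(p + 1 : ℤ)) = ((1+lam)^(p+1))⁻¹ := by
    rw [zpow_neg]
    norm_cast
  rw [← hsplit, hz, zero_add, htail, hS, hzpow]
  ring

theorem stmt_6 (p : ℕ) (lam : ℝ) (hl : |lam| < 1) :
    HasSum (fun n : ℕ => (n.choose p : ℝ) * dtail lam 1 n)
      (dff lam 1 (p + 1) / (p + 1).factorial * (1 + lam) ^ (-(p + 1 : ℤ)) * dexp lam 1) := by
  set a : ℕ → ℝ := fun k => dff lam 1 k / k.factorial with ha_def
  have ha : Summable a := summable_S lam hl 1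
  have hadexp : HasSum a (dexp lam 1) := by
    have h1 : dexp lam 1 = ∑' k, a k := by
      rw [dexp]; exact tsum_congr fun k => by simp [ha_def]
    rw [h1]; exact ha.hasSum
  set f : ℕ × ℕ → ℝ := fun nk => if nk.1 < nk.2 then (nk.1.choose p : ℝ) * a nk.2 else 0
    with hf_def
  have hcast_hockey : ∀ k : ℕ, ∑ n ∈ Finset.range k, (n.choose p : ℝ) = (k.choose (p+1) : ℝ) := by
    intro k
    rw [← Nat.cast_sum]
    exact_mod_cast congrArg (Nat.cast : ℕ → ℝ) (hockey p k)
  -- summability of |f|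
  have habs : Summable fun nk : ℕ × ℕ => |f nk| := by
    have hF : Summable fun kn : ℕ × ℕ => |f (kn.2, kn.1)| := by
      rw [summable_prod_of_nonneg (fun kn => abs_nonneg _)]
      constructor
      · intro k
        apply summable_of_ne_finset_zero (s := Finset.range k)
        intro n hn
        rw [Finset.mem_range, not_lt] at hn
        simp only [hf_def]
        rw [if_neg (by omega)]
        simp
      · have hrow : ∀ k : ℕ, (∑' n : ℕ, |f (n, k)|) = (k.choose (p+1) : ℝ) * |a k| := by
          intro k
          rw [tsum_eq_sum (s := Finset.range k) (fun n hn => by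
            rw [Finset.mem_range, not_lt] at hn
            simp only [hf_def]
            rw [if_neg (by omega)]
            simp)]
          rw [← hcast_hockey k, Finset.sum_mul]
          refine Finset.sum_congr rfl fun n hn => ?_
          rw [Finset.mem_range] at hn
          simp only [hf_def]
          rw [if_pos hn, abs_mul, Nat.abs_cast]
        refine Summable.congr ?_ (fun k => (hrow k).symm)
        refine (key_summable lam hl 1 (p+1)).congr fun k => ?_
        rw [ha_def]
        rw [abs_div, Nat.abs_cast, mul_div_assoc]
    have := (Equiv.prodComm ℕ ℕ).summable_iff (f := fun kn : ℕ × ℕ => |f (kn.2, kn.1)|)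
    exact this.mpr hF
  have hf : Summable f := summable_abs_iff.mp habs
  -- rows
  have hrows : ∀ n : ℕ, HasSum (fun k => f (n, k)) ((n.choose p : ℝ) * dtail lam 1 n) := by
    intro n
    have hg : HasSum (fun k => if k ≤ n then a k else 0)
        (∑ k ∈ Finset.range (n+1), dff lam 1 k * 1 ^ k / k.factorial) := by
      have h1 : HasSum (fun k => if k ≤ n then a k else 0)
          (∑ k ∈ Finset.range (n+1), if k ≤ n then a k else 0) :=
        hasSum_sum_of_ne_finset_zero (fun k hk => by
          rw [Finset.mem_range, not_lt] at hk
          rw [if_neg (by omega)])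
      have h2 : (∑ k ∈ Finset.range (n+1), if k ≤ n then a k else 0)
          = ∑ k ∈ Finset.range (n+1), dff lam 1 k * 1 ^ k / k.factorial := by
        refine Finset.sum_congr rfl fun k hk => ?_
        rw [Finset.mem_range] at hk
        rw [if_pos (by omega)]
        simp [ha_def]
      rwa [h2] at h1
    have htail : HasSum (fun k => if n < k then a k else 0) (dtail lam 1 n) := by
      have hfun : (fun k => if n < k then a k else 0)
          = fun k => a k - (if k ≤ n then a k else 0) := by
        funext k
        by_cases h : k ≤ n
        · rw [if_neg (by omega), if_pos h]; ring
        · rw [if_pos (by omega), if_neg h]; ring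
      rw [dtail, hfun]
      exact hadexp.sub hg
    have hfun2 : (fun k => f (n, k))
        = fun k => (n.choose p : ℝ) * (if n < k then a k else 0) := by
      funext k
      simp only [hf_def]
      by_cases h : n < k
      · rw [if_pos h, if_pos h]
      · rw [if_neg h, if_neg h, mul_zero]
    rw [hfun2]
    exact htail.mul_left _
  -- assemble
  have hmain : HasSum (fun n : ℕ => (n.choose p : ℝ) * dtail lam 1 n) (∑' nk : ℕ × ℕ, f nk) :=
    hf.hasSum.prod_fiberwise hrows
  suffices h : (∑' nk : ℕ × ℕ, f nk)
      = dff lam 1 (p + 1) / (p + 1).factorial * (1 + lam) ^ (-(p + 1 : ℤ)) * dexp lam 1 by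
    rwa [h] at hmain
  set g : ℕ × ℕ → ℝ := fun kn => f (kn.2, kn.1) with hg_def
  have hgsum : Summable g := by
    refine ((Equiv.prodComm ℕ ℕ).summable_iff (f := f)).mpr hf |>.congr fun kn => ?_
    rfl
  have hcols : ∀ k : ℕ, Summable fun n => g (k, n) := by
    intro k
    apply summable_of_ne_finset_zero (s := Finset.range k)
    intro n hn
    rw [Finset.mem_range, not_lt] at hn
    simp only [hg_def, hf_def]
    rw [if_neg (by omega)]
  have htsum1 : (∑' nk : ℕ × ℕ, f nk) = ∑' kn : ℕ × ℕ, g kn :=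
    ((Equiv.prodComm ℕ ℕ).tsum_eq f).symm
  have htsum2 : (∑' kn : ℕ × ℕ, g kn) = ∑' k : ℕ, ∑' n : ℕ, g (k, n) :=
    Summable.tsum_prod' hgsum hcols
  have hcol : ∀ k : ℕ, (∑' n : ℕ, g (k, n)) = (k.choose (p+1) : ℝ) * a k := by
    intro k
    rw [tsum_eq_sum (s := Finset.range k) (fun n hn => by
      rw [Finset.mem_range, not_lt] at hn
      simp only [hg_def, hf_def]
      rw [if_neg (by omega)])]
    rw [← hcast_hockey k, Finset.sum_mul]
    refine Finset.sum_congr rfl fun n hn => ?_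
    rw [Finset.mem_range] at hn
    simp only [hg_def, hf_def]
    rw [if_pos hn]
  rw [htsum1, htsum2, tsum_congr hcol]
  exact final_sum p lam hl
end
end
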